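/- arXiv:1908.03619 — 3 statements merged into one kernel-verified Lean document; each statement's English description precedes it below -/
import Mathlib

section
/- For untyped lambda terms represented with de Bruijn indices, the composition of the translation from named syntax to de Bruijn syntax with the reverse translation is the identity up to alpha-equivalence: for any closed named lambda term t, translating t to de Bruijn form and back yields a term alpha-equivalent to t. -/
/-- Named untyped λ-terms: variables are natural-number names. -/
inductive NTm : Type
  | nvar : ℕ → NTm
  | napp : NTm → NTm → NTm
  | nabs : ℕ → NTm → NTm

namespace NTm

/-- Correspondence of variable names relative to a list of pairs of bound names:
either both names were bound at the same (innermost) position, or neither is bound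
and they are equal. -/
def varMatch : List (ℕ × ℕ) → ℕ → ℕ → Prop
  | [], x, y => x = y
  | (a, b) :: env, x, y => (x = a ∧ y = b) ∨ (x ≠ a ∧ y ≠ b ∧ varMatch env x y)

/-- Alpha-equivalence of named terms, relative to a list of pairs of corresponding
bound names.  `AEq [] t s` is the standard alpha-equivalence. -/
inductive AEq : List (ℕ × ℕ) → NTm → NTm → Prop
  | var {env x y} : varMatch env x y → AEq env (nvar x) (nvar y)
  | app {env a b a' b'} : AEq env a a' → AEq env b b' →
      AEq env (napp a b) (napp a' b')
  | abs {env x y t s} : AEq ((x, y) :: env) t s →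
      AEq env (nabs x t) (nabs y s)

/-- All free variables of the term occur in the context list. -/
def ClosedUnder : List ℕ → NTm → Prop
  | ctx, nvar x => x ∈ ctx
  | ctx, napp a b => ClosedUnder ctx a ∧ ClosedUnder ctx b
  | ctx, nabs x t => ClosedUnder (x :: ctx) t

end NTm

/-- Untyped λ-terms in De Bruijn's style syntax. -/
inductive Deb : Type
  | Dvar : ℕ → Deb
  | Dapp : Deb → Deb → Deb
  | Dabs : Deb → Deb

namespace NTm

/-- Translation from named syntax to de Bruijn syntax, relative to a context list of
bound names: a name is translated to `Dvar` of its index in the context. -/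
def trans : List ℕ → NTm → Deb
  | ctx, nvar x => Deb.Dvar (ctx.idxOf x)
  | ctx, napp a b => Deb.Dapp (trans ctx a) (trans ctx b)
  | ctx, nabs x t => Deb.Dabs (trans (x :: ctx) t)

/-- A name fresh for the given context. -/
def fresh (ctx : List ℕ) : ℕ := ctx.foldr max 0 + 1

/-- The reverse translation, from de Bruijn syntax to named syntax, relative to a
context list of bound names. -/
def dtrans : List ℕ → Deb → NTm
  | ctx, Deb.Dvar n => nvar (ctx.getD n 0)
  | ctx, Deb.Dapp a b => napp (dtrans ctx a) (dtrans ctx b)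
  | ctx, Deb.Dabs t => nabs (fresh ctx) (dtrans (fresh ctx :: ctx) t)

end NTm


namespace NTm

lemma le_foldr_max {x : ℕ} {ctx : List ℕ} (h : x ∈ ctx) : x ≤ ctx.foldr max 0 := by
  induction ctx with
  | nil => cases h
  | cons a l ih =>
    rcases List.mem_cons.mp h with rfl | h
    · exact le_max_left _ _
    · exact le_trans (ih h) (le_max_right _ _)

lemma fresh_not_mem (ctx : List ℕ) : fresh ctx ∉ ctx := by
  intro h
  have := le_foldr_max h
  simp [fresh] at this

lemma varMatch_zip : ∀ (ctx ctx' : List ℕ) (x : ℕ), x ∈ ctx →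
    ctx'.length = ctx.length → ctx'.Nodup →
    varMatch (ctx'.zip ctx) (ctx'.getD (ctx.idxOf x) 0) x
  | [], _, x, h, _, _ => absurd h (List.not_mem_nil)
  | a :: ctx, [], x, _, hl, _ => by simp at hl
  | a :: ctx, b :: ctx', x, h, hl, hn => by
    by_cases hxa : x = a
    · subst hxa
      simp [List.idxOf_cons_self, varMatch]
    · have hidx : (a :: ctx).idxOf x = ctx.idxOf x + 1 := by
        simp [List.idxOf_cons, Ne.symm hxa]
      rw [hidx]
      have hmem : x ∈ ctx := by
        rcases List.mem_cons.mp h with rfl | h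
        · exact absurd rfl hxa
        · exact h
      have hl' : ctx'.length = ctx.length := by simpa using hl
      have hn' := (List.nodup_cons.mp hn).2
      have hbn := (List.nodup_cons.mp hn).1
      have hlt : ctx.idxOf x < ctx'.length := by
        rw [hl']; exact List.idxOf_lt_length_iff.mpr hmem
      have hval : ctx'.getD (ctx.idxOf x) 0 ∈ ctx' := by
        rw [List.getD_eq_getElem _ _ hlt]
        exact List.getElem_mem _
      refine Or.inr ⟨?_, hxa, varMatch_zip ctx ctx' x hmem hl' hn'⟩
      · intro he; rw [← he] at hbn; exact hbn hval

lemma main : ∀ (t : NTm) (ctx ctx' : List ℕ), ClosedUnder ctx t →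
    ctx'.length = ctx.length → ctx'.Nodup →
    AEq (ctx'.zip ctx) (dtrans ctx' (trans ctx t)) t
  | nvar x, ctx, ctx', h, hl, hn => by
    exact AEq.var (varMatch_zip ctx ctx' x h hl hn)
  | napp a b, ctx, ctx', h, hl, hn =>
    AEq.app (main a ctx ctx' h.1 hl hn) (main b ctx ctx' h.2 hl hn)
  | nabs x t, ctx, ctx', h, hl, hn => by
    refine AEq.abs ?_
    have := main t (x :: ctx) (fresh ctx' :: ctx') h (by simpa using hl)
      (List.nodup_cons.mpr ⟨fresh_not_mem ctx', hn⟩)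
    simpa [List.zip] using this

end NTm

/-- For any closed named λ-term `t`, translating `t` to de Bruijn form and back
yields a term alpha-equivalent to `t`. -/
theorem dtrans_trans_alpha_equiv (t : NTm) (h : NTm.ClosedUnder [] t) :
    NTm.AEq [] (NTm.dtrans [] (NTm.trans [] t)) t := by
  simpa using NTm.main t [] [] h rfl List.nodup_nil
end

section
/- Substitution via a fresh nominal is correct: for an abstraction t : tm ⇒ tm and a term u : tm, the function subst defined by introducing a fresh nominal X, recursively replacing every occurrence of X in t @ X by u, computes exactly the capture-avoiding substitution of the top-level bound variable of t by u; i.e., subst t u = t @ u (instantiation of the abstraction at u). -/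
/-- Terms of the type `tm` of untyped λ-terms: nominal constants, bound variables in
de Bruijn representation, application, and abstraction.  An abstraction `t : tm ⇒ tm`
is represented by its body with a distinguished de Bruijn binder. -/
inductive Tm : Type
  | nom : ℕ → Tm
  | bvar : ℕ → Tm
  | app : Tm → Tm → Tm
  | lam : Tm → Tm

namespace Tm

/-- `nomIn c t`: the nominal constant `c` occurs in `t`. -/
def nomIn (c : ℕ) : Tm → Prop
  | nom a => a = c
  | bvar _ => False
  | app a b => nomIn c a ∨ nomIn c b
  | lam t => nomIn c t

/-- Lift the de Bruijn indices `≥ d` by one. -/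
def liftT : ℕ → Tm → Tm
  | _, nom a => nom a
  | d, bvar n => if d ≤ n then bvar (n + 1) else bvar n
  | d, app a b => app (liftT d a) (liftT d b)
  | d, lam t => lam (liftT (d + 1) t)

def liftIter : ℕ → Tm → Tm
  | 0, t => t
  | d + 1, t => liftT 0 (liftIter d t)

/-- `t @ u`: capture-avoiding instantiation of the abstracted de Bruijn variable
(at depth `d`) of `t` by the arbitrary term `u`; `instT u 0 t` is `t @ u`. -/
def instT (u : Tm) : ℕ → Tm → Tm
  | _, nom a => nom a
  | d, bvar n => if n = d then liftIter d u else if d < n then bvar (n - 1) else bvar n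
  | d, app a b => app (instT u d a) (instT u d b)
  | d, lam t => lam (instT u (d + 1) t)

/-- The auxiliary function of `subst`: replace every occurrence of the nominal `X`
by the term `u` (recursing under `App` and under `Abs`, with the appropriate
lifting of `u` under binders). -/
def replNom (X : ℕ) (u : Tm) : ℕ → Tm → Tm
  | d, nom a => if a = X then liftIter d u else nom a
  | _, bvar n => bvar n
  | d, app a b => app (replNom X u d a) (replNom X u d b)
  | d, lam t => lam (replNom X u (d + 1) t)

end Tm


lemma Tm.liftIter_nom (d X : ℕ) : Tm.liftIter d (Tm.nom X) = Tm.nom X := by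
  induction d with
  | zero => rfl
  | succ d ih => simp [Tm.liftIter, ih, Tm.liftT]

lemma subst_aux (u : Tm) (X : ℕ) (hu : ¬ Tm.nomIn X u) :
    ∀ (r : Tm) (d : ℕ), ¬ Tm.nomIn X r →
      Tm.replNom X u d (Tm.instT (Tm.nom X) d r) = Tm.instT u d r := by
  intro r
  induction r with
  | nom a => intro d hr; simp [Tm.nomIn] at hr; simp [Tm.instT, Tm.replNom, hr]
  | bvar n =>
    intro d hr
    by_cases h : n = d
    · simp [Tm.instT, h, Tm.liftIter_nom, Tm.replNom]
    · by_cases h2 : d < n <;> simp [Tm.instT, h, h2, Tm.replNom]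
  | app a b iha ihb =>
    intro d hr
    simp [Tm.nomIn] at hr
    simp [Tm.instT, Tm.replNom, iha d hr.1, ihb d hr.2]
  | lam t ih =>
    intro d hr
    simp [Tm.nomIn] at hr
    simp [Tm.instT, Tm.replNom, ih (d+1) hr]

/-- Substitution via a fresh nominal is correct: for an abstraction (body) `r` and a
term `u`, with `X` a nominal fresh for both `r` and `u`, introducing `X`, replacing
every occurrence of `X` in `r @ X` by `u` computes exactly the capture-avoiding
instantiation `r @ u` of the abstraction at `u`. -/
theorem subst_via_fresh_nominal (r u : Tm) (X : ℕ)
    (hr : ¬ Tm.nomIn X r) (hu : ¬ Tm.nomIn X u) :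
    Tm.replNom X u 0 (Tm.instT (Tm.nom X) 0 r) = Tm.instT u 0 r := by
  exact subst_aux u X hu r 0 hr
end

section
/- Raising commutes nabla past universal quantification: in a logic with ∇ over a nominal type γ and ∀ over type τ, the formula ∇x:γ. ∀y:τ. B x y is logically equivalent to ∀h:(γ→τ). ∇x:γ. B x (h x). -/
open Filter

/-- Raising commutes ∇ past universal quantification: with the ∇-quantifier over an
(countably) infinite type `γ` of nominals interpreted via the cofinite quantifier
("for all fresh nominals"), the formula `∇x:γ. ∀y:τ. B x y` is logically equivalent
to `∀h:(γ→τ). ∇x:γ. B x (h x)`. -/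
theorem raising_nabla_forall {γ : Type*} [Infinite γ] {τ : Type*} (B : γ → τ → Prop) :
    (∀ᶠ x in (Filter.cofinite : Filter γ), ∀ y : τ, B x y) ↔
      (∀ h : γ → τ, ∀ᶠ x in (Filter.cofinite : Filter γ), B x (h x)) := by
  constructor
  · intro H h
    exact H.mono fun x hx => hx (h x)
  · intro H
    by_contra hc
    rw [Filter.eventually_cofinite] at hc
    have hS : {x : γ | ∃ y, ¬ B x y}.Infinite := by
      rw [← Set.not_infinite, not_not] at hc
      convert hc using 2 with x
      simp [not_forall]
    obtain ⟨x1, y0, _⟩ : ∃ x y, ¬ B x y := hS.nonempty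
    classical
    set h : γ → τ := fun x => if hx : ∃ y, ¬ B x y then hx.choose else y0 with hh
    have hinf : {x : γ | ¬ B x (h x)}.Infinite := by
      apply hS.mono
      intro x hx
      have hhx : h x = hx.choose := dif_pos hx
      simpa [hhx] using hx.choose_spec
    have := H h
    rw [Filter.eventually_cofinite] at this
    exact hinf this
end
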